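/- Let A, D be Hermitian n×n matrices with spectra in an open interval I, let f : I → ℝ be a monotone convex function, and let α ∈ (0,1). Then λ_i(f(αA + (1−α)D)) ≤ λ_i(α f(A) + (1−α) f(D)) for every i = 1, …, n. -/

import Mathlib

/-!
For a unit vector `x` and a self-adjoint `T` with orthonormal eigenbasis `b` and eigenvalues `μ`,
`re ⟪T x, x⟫ = ∑ j, ‖⟪b j, x⟫‖² μ j` is a convex combination of those `μ j` with `b j` not
orthogonal to `x`. Jensen's inequality then gives `f ⟪A x, x⟫ ≤ ⟪f(A) x, x⟫`, and with the
convexity of `f`, `f ⟪C x, x⟫ ≤ ⟪R x, x⟫` for `C = αA + (1-α)D` and `R = α f(A) + (1-α) f(D)`.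

To pass to eigenvalues, let `m` be the `i`-th largest of the values `f (ν j)`, `ν` the
eigenvalues of `C`, and `V` the span of the corresponding `i + 1` eigenvectors of `C`. A monotone
or antitone `f` is quasiconcave, so `{y ∈ I | m ≤ f y}` is convex; it contains the eigenvalues of
`C` on `V`, hence `⟪C x, x⟫` for unit `x ∈ V`, so `m ≤ ⟪R x, x⟫` on `V`. Courant–Fischer, in the
form "a subspace of dimension `i + 1` meets the span of the `n - i` lowest eigenvectors", turns
this into `m ≤ λ_i(R)`, and in the dual form into `λ_i(f(C)) ≤ m`.
-/

open scoped ComplexOrder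

/-- The eigenvalues of a (Hermitian) matrix arranged in non-increasing order, counted
with multiplicity; junk value `0` for non-Hermitian matrices. -/
noncomputable def eigDesc {n : ℕ} (A : Matrix (Fin n) (Fin n) ℂ) (i : Fin n) : ℝ :=
  if h : A.IsHermitian then (h.eigenvalues ∘ Tuple.sort h.eigenvalues) i.rev else 0

open scoped InnerProductSpace
open Finset Module RCLike Matrix

section SortDesc

variable {α : Type*} [LinearOrder α] {n : ℕ} (μ : Fin n → α) (i : Fin n)

/-- The `i`-th largest entry of `μ`, counting from `0`. -/
def sortDesc : α := μ (Tuple.sort μ i.rev)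

def topIndices : Finset (Fin n) := (Ici i.rev).image (Tuple.sort μ)

def bottomIndices : Finset (Fin n) := (Iic i.rev).image (Tuple.sort μ)

lemma card_topIndices : #(topIndices μ i) = i + 1 := by
  rw [topIndices, card_image_of_injective _ (Tuple.sort μ).injective, Fin.card_Ici, Fin.val_rev]
  omega

lemma card_bottomIndices : #(bottomIndices μ i) = n - i := by
  rw [bottomIndices, card_image_of_injective _ (Tuple.sort μ).injective, Fin.card_Iic,
    Fin.val_rev]
  omega

variable {μ i}

lemma sortDesc_le_of_mem_topIndices {j : Fin n} (hj : j ∈ topIndices μ i) :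
    sortDesc μ i ≤ μ j := by
  obtain ⟨k, hk, rfl⟩ := mem_image.1 hj
  exact Tuple.monotone_sort μ (mem_Ici.1 hk)

lemma le_sortDesc_of_mem_bottomIndices {j : Fin n} (hj : j ∈ bottomIndices μ i) :
    μ j ≤ sortDesc μ i := by
  obtain ⟨k, hk, rfl⟩ := mem_image.1 hj
  exact Tuple.monotone_sort μ (mem_Iic.1 hk)

end SortDesc

lemma exists_norm_eq_one_mem_of_finrank_lt_add {𝕜 E : Type*} [RCLike 𝕜] [NormedAddCommGroup E]
    [NormedSpace 𝕜 E] [FiniteDimensional 𝕜 E] {M N : Submodule 𝕜 E}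
    (h : finrank 𝕜 E < finrank 𝕜 M + finrank 𝕜 N) : ∃ x ∈ M, x ∈ N ∧ ‖x‖ = 1 := by
  obtain ⟨x, hxM, hxN, hx0⟩ : ∃ x ∈ M, x ∈ N ∧ x ≠ 0 := by
    by_contra! H
    exact h.not_ge (Submodule.finrank_add_finrank_le_of_disjoint (Submodule.disjoint_def.2 H))
  exact ⟨(‖x‖⁻¹ : 𝕜) • x, M.smul_mem _ hxM, N.smul_mem _ hxN, norm_smul_inv_norm hx0⟩

section Eigenbasis

variable {𝕜 E ι : Type*} [RCLike 𝕜] [NormedAddCommGroup E] [InnerProductSpace 𝕜 E] [Fintype ι]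

lemma OrthonormalBasis.inner_eq_zero_of_mem_span_image (b : OrthonormalBasis ι 𝕜 E)
    {S : Set ι} {j : ι} (hj : j ∉ S) {x : E} (hx : x ∈ Submodule.span 𝕜 (b '' S)) :
    ⟪b j, x⟫_𝕜 = 0 := by
  refine Submodule.span_le (p := LinearMap.ker (innerₛₗ 𝕜 (b j))) |>.2 ?_ hx
  rintro - ⟨k, hk, rfl⟩
  exact b.orthonormal.2 (ne_of_mem_of_not_mem hk hj).symm

lemma OrthonormalBasis.finrank_span_image (b : OrthonormalBasis ι 𝕜 E) (S : Finset ι) :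
    finrank 𝕜 (Submodule.span 𝕜 (b '' S)) = #S := by
  rw [Set.image_eq_range, finrank_span_eq_card (b := fun k : (S : Set ι) => b k)
    (b.orthonormal.linearIndependent.comp _ Subtype.val_injective)]
  simp

lemma re_inner_apply_self_of_apply_eq_smul {T : E →ₗ[𝕜] E} {v : E} (hv : ‖v‖ = 1) {c : ℝ}
    (h : T v = (c : 𝕜) • v) : re ⟪T v, v⟫_𝕜 = c := by
  rw [h, inner_smul_left, inner_self_eq_norm_sq_to_K, hv]
  simp

variable {T : E →ₗ[𝕜] E} {b : OrthonormalBasis ι 𝕜 E} {μ : ι → ℝ}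

lemma LinearMap.IsSymmetric.re_inner_apply_self_eq_sum (hT : T.IsSymmetric)
    (hb : ∀ j, T (b j) = (μ j : 𝕜) • b j) (x : E) :
    re ⟪T x, x⟫_𝕜 = ∑ j, ‖⟪b j, x⟫_𝕜‖ ^ 2 * μ j := by
  have hterm : ∀ j, ⟪T x, b j⟫_𝕜 * ⟪b j, x⟫_𝕜 = ((‖⟪b j, x⟫_𝕜‖ ^ 2 * μ j : ℝ) : 𝕜) := by
    intro j
    rw [hT, hb, inner_smul_right, ← inner_conj_symm, mul_assoc, RCLike.conj_mul]
    push_cast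
    ring
  rw [← b.sum_inner_mul_inner, sum_congr rfl fun j _ => hterm j, ← ofReal_sum, ofReal_re]

lemma LinearMap.IsSymmetric.re_inner_apply_self_mem_of_mem_span (hT : T.IsSymmetric)
    (hb : ∀ j, T (b j) = (μ j : 𝕜) • b j) {K : Set ℝ} (hK : Convex ℝ K) {S : Finset ι}
    (hS : ∀ j ∈ S, μ j ∈ K) {x : E} (hx : x ∈ Submodule.span 𝕜 (b '' S)) (hx1 : ‖x‖ = 1) :
    re ⟪T x, x⟫_𝕜 ∈ K := by
  have hout : ∀ j ∉ S, ‖⟪b j, x⟫_𝕜‖ ^ 2 = 0 := fun j hj => by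
    rw [b.inner_eq_zero_of_mem_span_image (mod_cast hj) hx, norm_zero, sq, zero_mul]
  have hweights : ∑ j ∈ S, ‖⟪b j, x⟫_𝕜‖ ^ 2 = 1 := by
    rw [sum_subset (subset_univ S) fun j _ hj => hout j hj, b.sum_sq_norm_inner_right, hx1,
      one_pow]
  rw [hT.re_inner_apply_self_eq_sum hb,
    ← sum_subset (subset_univ S) fun j _ hj => by rw [hout j hj, zero_mul]]
  exact hK.sum_mem (fun j _ => by positivity) hweights hS

lemma ConvexOn.map_re_inner_apply_self_le {I : Set ℝ} {f : ℝ → ℝ} (hf : ConvexOn ℝ I f)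
    (hT : T.IsSymmetric) (hb : ∀ j, T (b j) = (μ j : 𝕜) • b j) {T' : E →ₗ[𝕜] E}
    (hT' : T'.IsSymmetric) (hb' : ∀ j, T' (b j) = (f (μ j) : 𝕜) • b j) (hμ : ∀ j, μ j ∈ I)
    {x : E} (hx1 : ‖x‖ = 1) : f (re ⟪T x, x⟫_𝕜) ≤ re ⟪T' x, x⟫_𝕜 := by
  rw [hT.re_inner_apply_self_eq_sum hb, hT'.re_inner_apply_self_eq_sum hb']
  refine hf.map_sum_le (fun j _ => by positivity) ?_ fun j _ => hμ j
  rw [b.sum_sq_norm_inner_right, hx1, one_pow]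

end Eigenbasis

section CourantFischer

variable {𝕜 E : Type*} [RCLike 𝕜] [NormedAddCommGroup E] [InnerProductSpace 𝕜 E] {n : ℕ}
  {T : E →ₗ[𝕜] E} {b : OrthonormalBasis (Fin n) 𝕜 E} {μ : Fin n → ℝ} {i : Fin n}
  {M : Submodule 𝕜 E}

lemma LinearMap.IsSymmetric.le_sortDesc_of_subspace (hT : T.IsSymmetric)
    (hb : ∀ j, T (b j) = (μ j : 𝕜) • b j) (hM : finrank 𝕜 M = i + 1) {t : ℝ}
    (ht : ∀ x ∈ M, ‖x‖ = 1 → t ≤ re ⟪T x, x⟫_𝕜) : t ≤ sortDesc μ i := by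
  have : FiniteDimensional 𝕜 E := b.toBasis.finiteDimensional_of_finite
  obtain ⟨x, hxM, hxN, hx1⟩ := exists_norm_eq_one_mem_of_finrank_lt_add
    (N := Submodule.span 𝕜 (b '' bottomIndices μ i)) (by
      rw [hM, b.finrank_span_image, card_bottomIndices, finrank_eq_card_basis b.toBasis,
        Fintype.card_fin]
      omega)
  exact (ht x hxM hx1).trans <| hT.re_inner_apply_self_mem_of_mem_span hb (convex_Iic _)
    (fun j hj => le_sortDesc_of_mem_bottomIndices hj) hxN hx1

lemma LinearMap.IsSymmetric.sortDesc_le_of_subspace (hT : T.IsSymmetric)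
    (hb : ∀ j, T (b j) = (μ j : 𝕜) • b j) (hM : finrank 𝕜 M = n - i) {s : ℝ}
    (hs : ∀ x ∈ M, ‖x‖ = 1 → re ⟪T x, x⟫_𝕜 ≤ s) : sortDesc μ i ≤ s := by
  have : FiniteDimensional 𝕜 E := b.toBasis.finiteDimensional_of_finite
  obtain ⟨x, hxM, hxN, hx1⟩ := exists_norm_eq_one_mem_of_finrank_lt_add
    (N := Submodule.span 𝕜 (b '' topIndices μ i)) (by
      rw [hM, b.finrank_span_image, card_topIndices, finrank_eq_card_basis b.toBasis,
        Fintype.card_fin]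
      omega)
  exact (hT.re_inner_apply_self_mem_of_mem_span hb (convex_Ici _)
    (fun j hj => sortDesc_le_of_mem_topIndices hj) hxN hx1).trans (hs x hxM hx1)

end CourantFischer

section HermitianMatrix

variable {𝕜 ι : Type*} [RCLike 𝕜] [Fintype ι] [DecidableEq ι] {A : Matrix ι ι 𝕜}

lemma Matrix.IsHermitian.cfc_mulVec_eigenvectorBasis (hA : A.IsHermitian) (f : ℝ → ℝ) (j : ι) :
    cfc f A *ᵥ ⇑(hA.eigenvectorBasis j) =
      (f (hA.eigenvalues j) : 𝕜) • ⇑(hA.eigenvectorBasis j) := by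
  rw [hA.cfc_eq, IsHermitian.cfc, Unitary.conjStarAlgAut_apply, ← mulVec_mulVec, ← mulVec_mulVec,
    hA.star_eigenvectorUnitary_mulVec, diagonal_mulVec_single, ← hA.eigenvectorUnitary_mulVec,
    ← mulVec_smul, ← Pi.single_smul]
  simp

lemma Matrix.IsHermitian.toEuclideanLin_eigenvectorBasis (hA : A.IsHermitian) (j : ι) :
    toEuclideanLin A (hA.eigenvectorBasis j) =
      (hA.eigenvalues j : 𝕜) • hA.eigenvectorBasis j := by
  rw [toLpLin_apply, hA.mulVec_eigenvectorBasis, RCLike.real_smul_eq_coe_smul (K := 𝕜)]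
  rfl

lemma Matrix.IsHermitian.toEuclideanLin_cfc_eigenvectorBasis (hA : A.IsHermitian) (f : ℝ → ℝ)
    (j : ι) : toEuclideanLin (cfc f A) (hA.eigenvectorBasis j) =
      (f (hA.eigenvalues j) : 𝕜) • hA.eigenvectorBasis j := by
  rw [toLpLin_apply, hA.cfc_mulVec_eigenvectorBasis]
  rfl

lemma Matrix.IsHermitian.re_inner_toEuclideanLin_mem (hA : A.IsHermitian) {K : Set ℝ}
    (hK : Convex ℝ K) (hAK : spectrum ℝ A ⊆ K) {x : EuclideanSpace 𝕜 ι} (hx1 : ‖x‖ = 1) :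
    re ⟪toEuclideanLin A x, x⟫_𝕜 ∈ K := by
  refine (isSymmetric_toEuclideanLin_iff.2 hA).re_inner_apply_self_mem_of_mem_span
    hA.toEuclideanLin_eigenvectorBasis hK (S := univ)
    (fun j _ => hAK (hA.eigenvalues_mem_spectrum_real j)) ?_ hx1
  rw [coe_univ, Set.image_univ, ← hA.eigenvectorBasis.coe_toBasis, Basis.span_eq]
  trivial

lemma ConvexOn.map_re_inner_toEuclideanLin_le {I : Set ℝ} {f : ℝ → ℝ} (hf : ConvexOn ℝ I f)
    (hA : A.IsHermitian) (hAI : spectrum ℝ A ⊆ I) {x : EuclideanSpace 𝕜 ι} (hx1 : ‖x‖ = 1) :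
    f (re ⟪toEuclideanLin A x, x⟫_𝕜) ≤ re ⟪toEuclideanLin (cfc f A) x, x⟫_𝕜 :=
  hf.map_re_inner_apply_self_le (isSymmetric_toEuclideanLin_iff.2 hA)
    hA.toEuclideanLin_eigenvectorBasis (isSymmetric_toEuclideanLin_iff.2 (cfc_predicate f A))
    (hA.toEuclideanLin_cfc_eigenvectorBasis f)
    (fun j => hAI (hA.eigenvalues_mem_spectrum_real j)) hx1

lemma re_inner_toEuclideanLin_smul_add_smul (a c : ℝ) (A B : Matrix ι ι 𝕜)
    (x : EuclideanSpace 𝕜 ι) :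
    re ⟪toEuclideanLin (a • A + c • B) x, x⟫_𝕜 =
      a * re ⟪toEuclideanLin A x, x⟫_𝕜 + c * re ⟪toEuclideanLin B x, x⟫_𝕜 := by
  rw [map_add, LinearMap.add_apply, inner_add_left, map_add,
    RCLike.real_smul_eq_coe_smul (K := 𝕜) a, RCLike.real_smul_eq_coe_smul (K := 𝕜) c,
    map_smul, map_smul]
  simp only [LinearMap.smul_apply, inner_smul_left, conj_ofReal, re_ofReal_mul]

end HermitianMatrix

section EigDesc

variable {n : ℕ}

lemma eigDesc_eq_sortDesc {B : Matrix (Fin n) (Fin n) ℂ} (hB : B.IsHermitian) :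
    eigDesc B = sortDesc hB.eigenvalues := by
  ext i
  rw [eigDesc, dif_pos hB]
  rfl

lemma eigDesc_cfc_le_of_map_re_inner_le {C R : Matrix (Fin n) (Fin n) ℂ} (hC : C.IsHermitian)
    (hR : R.IsHermitian) {I : Set ℝ} {f : ℝ → ℝ} (hf : QuasiconcaveOn ℝ I f)
    (hCI : ∀ x : EuclideanSpace ℂ (Fin n), ‖x‖ = 1 → re ⟪toEuclideanLin C x, x⟫_ℂ ∈ I)
    (hCR : ∀ x : EuclideanSpace ℂ (Fin n), ‖x‖ = 1 →
      f (re ⟪toEuclideanLin C x, x⟫_ℂ) ≤ re ⟪toEuclideanLin R x, x⟫_ℂ) (i : Fin n) :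
    eigDesc (cfc f C) i ≤ eigDesc R i := by
  have hfC : (cfc f C).IsHermitian := cfc_predicate f C
  set b := hC.eigenvectorBasis
  set m := sortDesc (f ∘ hC.eigenvalues) i
  have hν : ∀ j, hC.eigenvalues j ∈ I := fun j => by
    simpa [re_inner_apply_self_of_apply_eq_smul (b.orthonormal.1 j)
      (hC.toEuclideanLin_eigenvectorBasis j)] using hCI (b j) (b.orthonormal.1 j)
  calc eigDesc (cfc f C) i ≤ m := by
        rw [eigDesc_eq_sortDesc hfC]
        refine (isSymmetric_toEuclideanLin_iff.2 hfC).sortDesc_le_of_subspace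
          hfC.toEuclideanLin_eigenvectorBasis
          (M := Submodule.span ℂ (b '' bottomIndices (f ∘ hC.eigenvalues) i))
          (b.finrank_span_image _ |>.trans (card_bottomIndices _ _)) fun x hx hx1 => ?_
        exact (isSymmetric_toEuclideanLin_iff.2 hfC).re_inner_apply_self_mem_of_mem_span
          (hC.toEuclideanLin_cfc_eigenvectorBasis f) (convex_Iic m)
          (fun j hj => le_sortDesc_of_mem_bottomIndices hj) hx hx1
    _ ≤ eigDesc R i := by
        rw [eigDesc_eq_sortDesc hR]
        refine (isSymmetric_toEuclideanLin_iff.2 hR).le_sortDesc_of_subspace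
          hR.toEuclideanLin_eigenvectorBasis
          (M := Submodule.span ℂ (b '' topIndices (f ∘ hC.eigenvalues) i))
          (b.finrank_span_image _ |>.trans (card_topIndices _ _)) fun x hx hx1 => ?_
        have hmem := (isSymmetric_toEuclideanLin_iff.2 hC).re_inner_apply_self_mem_of_mem_span
          hC.toEuclideanLin_eigenvectorBasis (hf m)
          (fun j hj => ⟨hν j, sortDesc_le_of_mem_topIndices hj⟩) hx hx1
        exact hmem.2.trans (hCR x hx1)

end EigDesc

theorem eigDesc_cfc_convexCombination_le {n : ℕ} (A D : Matrix (Fin n) (Fin n) ℂ)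
    (hA : A.IsHermitian) (hD : D.IsHermitian)
    (I : Set ℝ)
    (hAspec : spectrum ℝ A ⊆ I) (hDspec : spectrum ℝ D ⊆ I)
    (f : ℝ → ℝ) (hf : ConvexOn ℝ I f) (hf_mono : MonotoneOn f I ∨ AntitoneOn f I)
    (α : ℝ) (hα0 : 0 < α) (hα1 : α < 1) :
    ∀ i : Fin n,
      eigDesc (cfc f (α • A + (1 - α) • D)) i ≤
        eigDesc (α • cfc f A + (1 - α) • cfc f D) i := by
  have hC : (α • A + (1 - α) • D).IsHermitian :=
    ((IsSelfAdjoint.all α).smul hA).add ((IsSelfAdjoint.all (1 - α)).smul hD)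
  have hR : (α • cfc f A + (1 - α) • cfc f D).IsHermitian :=
    ((IsSelfAdjoint.all α).smul (cfc_predicate f A)).add
      ((IsSelfAdjoint.all (1 - α)).smul (cfc_predicate f D))
  have hfI : QuasiconcaveOn ℝ I f := hf_mono.elim (·.quasiconcaveOn hf.1) (·.quasiconcaveOn hf.1)
  have key : ∀ x : EuclideanSpace ℂ (Fin n), ‖x‖ = 1 →
      re ⟪toEuclideanLin (α • A + (1 - α) • D) x, x⟫_ℂ ∈ I ∧
        f (re ⟪toEuclideanLin (α • A + (1 - α) • D) x, x⟫_ℂ) ≤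
          re ⟪toEuclideanLin (α • cfc f A + (1 - α) • cfc f D) x, x⟫_ℂ := by
    intro x hx1
    have hAx := hA.re_inner_toEuclideanLin_mem hf.1 hAspec hx1
    have hDx := hD.re_inner_toEuclideanLin_mem hf.1 hDspec hx1
    simp only [re_inner_toEuclideanLin_smul_add_smul]
    refine ⟨hf.1 hAx hDx hα0.le (by linarith) (by ring), ?_⟩
    calc _ ≤ α * f (re ⟪toEuclideanLin A x, x⟫_ℂ) + (1 - α) * f (re ⟪toEuclideanLin D x, x⟫_ℂ) :=
          hf.2 hAx hDx hα0.le (by linarith) (by ring)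
      _ ≤ _ := by
          gcongr
          exacts [hf.map_re_inner_toEuclideanLin_le hA hAspec hx1,
            hf.map_re_inner_toEuclideanLin_le hD hDspec hx1]
  exact eigDesc_cfc_le_of_map_re_inner_le hC hR hfI (fun x hx1 => (key x hx1).1)
    fun x hx1 => (key x hx1).2
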